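/- arXiv:1808.10684 — 4 statements merged into one kernel-verified Lean document; each statement's English description precedes it below -/
import Mathlib

section
/- Let G be a group generated by a finite set Y, let N ⊆ G be a subset, and let f : ℕ → [0,1] be a function such that for all n ≥ 0 we have |N ∩ B_Y(n)| / |B_Y(n)| ≤ f(n), and for every g ∈ G \ N, |{h ∈ B_Y(n) : [g,h] ∈ N}| / |B_Y(n)| ≤ f(n). Then for all integers r, n ≥ 0, |{(x₀,…,x_r) ∈ B_Y(n)^{r+1} : [x₀,…,x_r] ∈ N}| / |B_Y(n)|^{r+1} ≤ (r+1)·f(n), where [x₀,…,x_r] denotes the (r+1)-fold left-normed simple commutator. -/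
noncomputable section

/-- Ball of radius `n` in the word metric with respect to a generating set `Y`. -/
def wordBall {G : Type*} [Group G] (Y : Set G) (n : ℕ) : Set G :=
  {g | ∃ l : List G, (∀ x ∈ l, x ∈ Y ∨ x⁻¹ ∈ Y) ∧ l.length ≤ n ∧ l.prod = g}

/-- The left-normed simple commutator `[x₀,…,x_r]`, with `[g,h] = g⁻¹h⁻¹gh`. -/
def simpleCommutator {G : Type*} [Group G] : List G → G
  | [] => 1
  | x :: xs => xs.foldl (fun c y => c⁻¹ * y⁻¹ * c * y) x

/-!
Let `B` be the ball and `S_r` the set of `(r+1)`-tuples over `B` whose commutator lies in `N`.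
Induct on `r`, splitting off the last entry: `[x₀,…,x_{r+1}] = [c, x_{r+1}]` with
`c = [x₀,…,x_r]`. Tuples whose prefix has `c ∈ N` number at most `|S_r|·|B|`; for each of the
`|B|^{r+1}` prefixes with `c ∉ N`, at most `f(n)|B|` last entries `h` give `[c, h] ∈ N`.
Summing, `|S_{r+1}| ≤ (r+1) f(n) |B|^{r+2} + f(n) |B|^{r+2}`.
-/

open Finset

theorem Finset.card_filter_piFinset_const_succ {α : Type*} {n : ℕ} (B : Finset α)
    (P : (Fin (n + 1) → α) → Prop) [DecidablePred P] :
    #{x ∈ Fintype.piFinset fun _ : Fin (n + 1) => B | P x} =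
      ∑ y ∈ Fintype.piFinset fun _ : Fin n => B, #{h ∈ B | P (Fin.snoc y h)} := by
  classical
  rw [card_eq_sum_card_fiberwise (f := Fin.init) (t := Fintype.piFinset fun _ : Fin n => B)]
  · refine sum_congr rfl fun y hy =>
      card_nbij' (fun x => x (Fin.last n)) (Fin.snoc (α := fun _ => α) y) ?_ ?_ ?_ ?_
    · intro x hx
      simp only [mem_coe, mem_filter, Fintype.mem_piFinset] at hx
      obtain ⟨⟨hxB, hPx⟩, rfl⟩ := hx
      simp_all
    · intro h hh
      simp_all [Fintype.mem_piFinset, Fin.forall_fin_succ']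
    · intro x hx
      simp only [mem_coe, mem_filter] at hx
      simp [← hx.2]
    · intro h _
      simp
  · intro x hx
    simp_all [Fintype.mem_piFinset, Fin.init]

lemma simpleCommutator_append_singleton {G : Type*} [Group G] {l : List G} (hl : l ≠ [])
    (h : G) :
    simpleCommutator (l ++ [h]) = (simpleCommutator l)⁻¹ * h⁻¹ * simpleCommutator l * h := by
  obtain ⟨x, xs, rfl⟩ := List.exists_cons_of_ne_nil hl
  simp [simpleCommutator]

lemma simpleCommutator_ofFn_snoc {G : Type*} [Group G] {r : ℕ} (y : Fin (r + 1) → G) (h : G) :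
    simpleCommutator (List.ofFn (Fin.snoc y h : Fin (r + 2) → G)) =
      (simpleCommutator (List.ofFn y))⁻¹ * h⁻¹ * simpleCommutator (List.ofFn y) * h := by
  rw [List.ofFn_succ', ← simpleCommutator_append_singleton (by simp)]
  simp [List.concat_eq_append]

theorem card_filter_simpleCommutator_mem_le {G : Type*} [Group G] (B : Finset G) (N : Set G)
    [DecidablePred (· ∈ N)] (c : ℝ) (h1 : (#{g ∈ B | g ∈ N} : ℝ) ≤ c * #B)
    (h2 : ∀ g ∉ N, (#{h ∈ B | g⁻¹ * h⁻¹ * g * h ∈ N} : ℝ) ≤ c * #B) (r : ℕ) :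
    (#{x ∈ Fintype.piFinset fun _ : Fin (r + 1) => B | simpleCommutator (List.ofFn x) ∈ N} : ℝ)
      ≤ (r + 1) * c * #B ^ (r + 1) := by
  induction r with
  | zero =>
    rw [card_filter_piFinset_const_succ, Fintype.piFinset_of_isEmpty, Fintype.sum_unique]
    simpa [simpleCommutator, Fin.snoc] using h1
  | succ r ih =>
    have hc : 0 ≤ c * #B := (Nat.cast_nonneg _).trans h1
    have hfiber : ∀ y : Fin (r + 1) → G,
        (#{h ∈ B | simpleCommutator (List.ofFn (Fin.snoc y h : Fin (r + 2) → G)) ∈ N} : ℝ) ≤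
          (if simpleCommutator (List.ofFn y) ∈ N then (#B : ℝ) else 0) + c * #B := by
      intro y
      simp only [simpleCommutator_ofFn_snoc]
      split_ifs with hy
      · exact le_add_of_le_of_nonneg (mod_cast card_filter_le _ _) hc
      · simpa using h2 _ hy
    rw [card_filter_piFinset_const_succ, Nat.cast_sum]
    calc _ ≤ ∑ y ∈ Fintype.piFinset fun _ : Fin (r + 1) => B,
          ((if simpleCommutator (List.ofFn y) ∈ N then (#B : ℝ) else 0) + c * #B) :=
          sum_le_sum fun y _ => hfiber y
      _ = #{x ∈ Fintype.piFinset fun _ : Fin (r + 1) => B | simpleCommutator (List.ofFn x) ∈ N}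
            * #B + #B ^ (r + 1) * (c * #B) := by
          rw [sum_add_distrib, sum_ite, sum_const, sum_const_zero, sum_const,
            Fintype.card_piFinset_const]
          simp
      _ ≤ (r + 1) * c * #B ^ (r + 1) * #B + #B ^ (r + 1) * (c * #B) := by gcongr
      _ = (↑(r + 1) + 1) * c * #B ^ (r + 1 + 1) := by push_cast; ring

lemma wordBall_finite {G : Type*} [Group G] {Y : Set G} (hY : Y.Finite) (n : ℕ) :
    (wordBall Y n).Finite := by
  set S : Set G := Y ∪ Y⁻¹
  have : Finite S := (hY.union hY.inv).to_subtype
  refine ((List.finite_length_le S n).image fun l => (l.map (↑)).prod).subset ?_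
  rintro g ⟨l, hl, hlen, rfl⟩
  lift l to List S using hl
  exact ⟨l, by simpa using hlen, rfl⟩

theorem stmt0_general {G : Type*} [Group G] (Y : Set G) (hYfin : Y.Finite)
    (N : Set G) (f : ℕ → ℝ)
    (h1 : ∀ n : ℕ, ((N ∩ wordBall Y n).ncard : ℝ) ≤ f n * ((wordBall Y n).ncard : ℝ))
    (h2 : ∀ g ∉ N, ∀ n : ℕ,
      (({h | h ∈ wordBall Y n ∧ g⁻¹ * h⁻¹ * g * h ∈ N}).ncard : ℝ) ≤
        f n * ((wordBall Y n).ncard : ℝ)) :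
    ∀ r n : ℕ,
      (({x : Fin (r + 1) → G | (∀ i, x i ∈ wordBall Y n) ∧
          simpleCommutator (List.ofFn x) ∈ N}).ncard : ℝ) ≤
        (r + 1 : ℝ) * f n * ((wordBall Y n).ncard : ℝ) ^ (r + 1) := by
  classical
  intro r n
  set B := (wordBall_finite hYfin n).toFinset
  have hB : wordBall Y n = B := (Set.Finite.coe_toFinset _).symm
  have hN : (N ∩ B).ncard = #{g ∈ B | g ∈ N} := by
    rw [← Set.ncard_coe_finset]
    congr 1
    ext
    simp [and_comm]
  have hcomm : ∀ g, {h | h ∈ (B : Set G) ∧ g⁻¹ * h⁻¹ * g * h ∈ N}.ncard =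
      #{h ∈ B | g⁻¹ * h⁻¹ * g * h ∈ N} := fun g => by
    rw [← Set.ncard_coe_finset, coe_filter]
    rfl
  have htuples : {x : Fin (r + 1) → G | (∀ i, x i ∈ (B : Set G)) ∧
      simpleCommutator (List.ofFn x) ∈ N}.ncard =
      #{x ∈ Fintype.piFinset fun _ : Fin (r + 1) => B | simpleCommutator (List.ofFn x) ∈ N} := by
    rw [← Set.ncard_coe_finset, coe_filter]
    simp
  have h2n := fun g hg => h2 g hg n
  specialize h1 n
  simp only [hB, Set.ncard_coe_finset, hN, hcomm] at h1 h2n ⊢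
  rw [htuples]
  exact card_filter_simpleCommutator_mem_le B N (f n) h1 h2n r

theorem stmt0 {G : Type*} [Group G] (Y : Set G) (hYfin : Y.Finite)
    (hYgen : Subgroup.closure Y = ⊤) (N : Set G) (f : ℕ → ℝ)
    (hf : ∀ n, f n ∈ Set.Icc (0 : ℝ) 1)
    (h1 : ∀ n : ℕ, ((N ∩ wordBall Y n).ncard : ℝ) ≤ f n * ((wordBall Y n).ncard : ℝ))
    (h2 : ∀ g ∉ N, ∀ n : ℕ,
      (({h | h ∈ wordBall Y n ∧ g⁻¹ * h⁻¹ * g * h ∈ N}).ncard : ℝ) ≤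
        f n * ((wordBall Y n).ncard : ℝ)) :
    ∀ r n : ℕ,
      (({x : Fin (r + 1) → G | (∀ i, x i ∈ wordBall Y n) ∧
          simpleCommutator (List.ofFn x) ∈ N}).ncard : ℝ) ≤
        (r + 1 : ℝ) * f n * ((wordBall Y n).ncard : ℝ) ^ (r + 1) :=
  stmt0_general Y hYfin N f h1 h2
end
end

section
/- Let p(X) = ∏_{i=1}^m (X - λᵢ) be a monic polynomial of degree m with integer coefficients such that |λᵢ| = 1 for all i. Then every root λᵢ of p is a root of unity. -/
/-!
Every complex conjugate of a root `z` of `p` is again a root of `p`, hence lies on the unit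
circle. In the number field `ℚ(z)` the powers of `z` are algebraic integers all of whose
conjugates have norm one; there are only finitely many such elements, so two powers of `z`
coincide and `z` is a root of unity.
-/

open Polynomial IntermediateField NumberField

theorem Polynomial.isRoot_map_intCast_iff {R : Type*} [CommRing R] (p : ℤ[X]) (x : R) :
    (p.map (Int.castRingHom R)).IsRoot x ↔ aeval x p = 0 := by
  rw [IsRoot, ← algebraMap_int_eq, eval_map_algebraMap]

theorem Complex.pow_eq_one_of_isIntegral_of_norm_embedding_eq_one {z : ℂ} (hz : IsIntegral ℤ z)
    (hconj : ∀ φ : ℚ⟮z⟯ →+* ℂ, ‖φ (AdjoinSimple.gen ℚ z)‖ = 1) :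
    ∃ n : ℕ, 0 < n ∧ z ^ n = 1 := by
  have : NumberField ℚ⟮z⟯ := { to_finiteDimensional := adjoin.finiteDimensional hz.tower_top }
  have hgen : IsIntegral ℤ (AdjoinSimple.gen ℚ z) :=
    (isIntegral_algebraMap_iff (algebraMap ℚ⟮z⟯ ℂ).injective).mp (by simpa using hz)
  obtain ⟨n, hn, hpow⟩ := Embeddings.pow_eq_one_of_norm_eq_one ℚ⟮z⟯ ℂ hgen hconj
  exact ⟨n, hn, by simpa using congrArg (algebraMap ℚ⟮z⟯ ℂ) hpow⟩

/-- **Kronecker's theorem.** If a monic integer polynomial has all of its complex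
roots on the unit circle, then every root is a root of unity. -/
theorem stmt1 (p : Polynomial ℤ) (hp : p.Monic)
    (habs : ∀ z : ℂ, (p.map (Int.castRingHom ℂ)).IsRoot z → ‖z‖ = 1) :
    ∀ z : ℂ, (p.map (Int.castRingHom ℂ)).IsRoot z → ∃ n : ℕ, 0 < n ∧ z ^ n = 1 := by
  intro z hz
  rw [isRoot_map_intCast_iff] at hz
  have hgen : aeval (AdjoinSimple.gen ℚ z) p = 0 := (algebraMap ℚ⟮z⟯ ℂ).injective <| by
    rw [← aeval_algebraMap_apply, AdjoinSimple.algebraMap_gen, hz, map_zero]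
  refine Complex.pow_eq_one_of_isIntegral_of_norm_embedding_eq_one ⟨p, hp, hz⟩ fun φ ↦ habs _ ?_
  rw [isRoot_map_intCast_iff, ← RingHom.toIntAlgHom_apply, aeval_algHom_apply, hgen, map_zero]
end

section
/- Let T be an m × m integer matrix with det T ≠ 0 all of whose eigenvalues equal 1. Then the group G(m,T) = ⟨a₁,…,a_m,t | [aᵢ,aⱼ]=1, t a^u t⁻¹ = a^{Tu}⟩ is nilpotent. -/
/-!
All eigenvalues of `T` equal `1`, so by Cayley–Hamilton `N = T - 1` is nilpotent; in
particular `T` is invertible over `ℤ` and every element of `G(m,T)` can be written as `a^u t^q`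
with `q ∈ ℤ`. The commutator of `a^u t^p` and `a^v t^q` is `a^((T^p - 1) v - (T^q - 1) u)`, and
`T^q - 1` is `N` times an element commuting with `N`. Hence
`G ≥ a^(ℤ^m) ≥ a^(N ℤ^m) ≥ a^(N² ℤ^m) ≥ ⋯` is a descending central series, and it reaches `1`
because `N^m = 0`.
-/

noncomputable section

/-- Relations of the ascending HNN-extension `G(m,T)`. -/
def gmtRels (m : ℕ) (T : Matrix (Fin m) (Fin m) ℤ) : Set (FreeGroup (Fin m ⊕ Unit)) :=
  {r | (∃ i j : Fin m,
          r = FreeGroup.of (Sum.inl i) * FreeGroup.of (Sum.inl j) *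
              (FreeGroup.of (Sum.inl i))⁻¹ * (FreeGroup.of (Sum.inl j))⁻¹) ∨
       (∃ i : Fin m,
          r = FreeGroup.of (Sum.inr ()) * FreeGroup.of (Sum.inl i) *
              (FreeGroup.of (Sum.inr ()))⁻¹ *
              ((List.ofFn fun j : Fin m => FreeGroup.of (Sum.inl j) ^ (T j i)).prod)⁻¹)}

/-- The ascending HNN-extension `G(m,T)` of `ℤ^m` determined by `T`. -/
abbrev GmT (m : ℕ) (T : Matrix (Fin m) (Fin m) ℤ) : Type := PresentedGroup (gmtRels m T)

def gmtA (m : ℕ) (T : Matrix (Fin m) (Fin m) ℤ) (i : Fin m) : GmT m T :=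
  PresentedGroup.of (Sum.inl i)

def gmtT (m : ℕ) (T : Matrix (Fin m) (Fin m) ℤ) : GmT m T :=
  PresentedGroup.of (Sum.inr ())

/-- `a^u = a₁^{u₁} ⋯ a_m^{u_m}`. -/
def gmtAProd (m : ℕ) (T : Matrix (Fin m) (Fin m) ℤ) (u : Fin m → ℤ) : GmT m T :=
  (List.ofFn fun i => gmtA m T i ^ (u i)).prod

lemma gmtTauAux (m : ℕ) (T : Matrix (Fin m) (Fin m) ℤ) :
    ∀ r ∈ gmtRels m T,
      (FreeGroup.lift (Sum.elim (fun _ : Fin m => (1 : Multiplicative ℤ))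
        (fun _ : Unit => Multiplicative.ofAdd 1))) r = 1 := by
  rintro r (⟨i, j, rfl⟩ | ⟨i, rfl⟩) <;>
    simp [map_mul, map_inv, map_list_prod, List.map_ofFn, Function.comp, map_zpow,
      List.prod_ofFn]

/-- The `t`-exponent homomorphism `τ`. -/
def gmtTau (m : ℕ) (T : Matrix (Fin m) (Fin m) ℤ) : GmT m T →* Multiplicative ℤ :=
  PresentedGroup.toGroup (gmtTauAux m T)

/-- The elliptic subgroup `A(m,T) = ker τ`. -/
def gmtElliptic (m : ℕ) (T : Matrix (Fin m) (Fin m) ℤ) : Subgroup (GmT m T) :=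
  (gmtTau m T).ker

theorem Units.exists_commute_val_zpow_sub_one {S : Type*} [Ring S] (x : Sˣ) (q : ℤ) :
    ∃ c : S, Commute ((x : S) - 1) c ∧ ((x ^ q : Sˣ) : S) - 1 = ((x : S) - 1) * c := by
  have hx : Commute ((x : S) - 1) x := (Commute.refl _).sub_left (Commute.one_left _)
  have hxinv : Commute ((x : S) - 1) ↑x⁻¹ :=
    (Units.commute_coe_inv x).sub_left (Commute.one_left _)
  induction q using Int.induction_on with
  | zero => exact ⟨0, Commute.zero_right _, by simp⟩
  | succ q ih =>
    obtain ⟨c, hc, hq⟩ := ih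
    refine ⟨x * c + 1, (hx.mul_right hc).add_right (Commute.one_right _), ?_⟩
    rw [add_comm, zpow_one_add, Units.val_mul, mul_add, ← mul_assoc, hx.eq, mul_assoc, ← hq]
    noncomm_ring
  | pred q ih =>
    obtain ⟨c, hc, hq⟩ := ih
    refine ⟨↑x⁻¹ * c - ↑x⁻¹, (hxinv.mul_right hc).sub_right hxinv, ?_⟩
    have hinv : (↑x⁻¹ : S) * (x - 1) = 1 - ↑x⁻¹ := by rw [mul_sub_one, Units.inv_mul]
    rw [show -(q : ℤ) - 1 = -1 + -q by ring, zpow_add, zpow_neg_one, Units.val_mul, mul_sub,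
      ← mul_assoc, hxinv.eq, mul_assoc, ← hq, hinv]
    noncomm_ring

theorem Units.exists_val_zpow_sub_one_mul_pow_eq {S : Type*} [Ring S] (x : Sˣ) (q : ℤ)
    (k : ℕ) :
    ∃ c : S, (((x ^ q : Sˣ) : S) - 1) * ((x : S) - 1) ^ k = ((x : S) - 1) ^ (k + 1) * c := by
  obtain ⟨c, hc, hq⟩ := x.exists_commute_val_zpow_sub_one q
  exact ⟨c, by rw [hq, mul_assoc, ← (hc.pow_left k).eq, ← mul_assoc, ← pow_succ']⟩

section UnipotentConjugation

open Multiplicative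
open scoped commutatorElement

variable {R M G : Type*} [Ring R] [AddCommGroup M] [Module R M] [Group G]
  {a : Multiplicative M →* G} {t : G} {U : (Module.End R M)ˣ}

theorem zpow_mul_mul_inv_eq_of_conj
    (hconj : ∀ u, t * a (ofAdd u) * t⁻¹ = a (ofAdd ((U : Module.End R M) u)))
    (q : ℤ) (u : M) :
    t ^ q * a (ofAdd u) * (t ^ q)⁻¹ = a (ofAdd ((↑(U ^ q) : Module.End R M) u)) := by
  induction q using Int.induction_on generalizing u with
  | zero => simp
  | succ q ih =>
    rw [zpow_add_one t, zpow_add_one U, Units.val_mul, Module.End.mul_apply, ← ih, ← hconj]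
    group
  | pred q ih =>
    have hinv : t⁻¹ * a (ofAdd u) * t = a (ofAdd ((↑U⁻¹ : Module.End R M) u)) := by
      have := hconj ((↑U⁻¹ : Module.End R M) u)
      rw [← Module.End.mul_apply, Units.mul_inv, Module.End.one_apply] at this
      rw [← this]
      group
    rw [zpow_sub_one t, zpow_sub_one U, Units.val_mul, Module.End.mul_apply, ← ih, ← hinv]
    group

theorem exists_eq_mul_zpow_of_conj (hgen : Subgroup.closure (insert t (Set.range a)) = ⊤)
    (hconj : ∀ u, t * a (ofAdd u) * t⁻¹ = a (ofAdd ((U : Module.End R M) u))) (g : G) :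
    ∃ (u : M) (q : ℤ), g = a (ofAdd u) * t ^ q := by
  have hg : g ∈ Subgroup.closure (insert t (Set.range a)) := hgen ▸ Subgroup.mem_top g
  induction hg using Subgroup.closure_induction with
  | mem g hg =>
    rcases hg with rfl | ⟨x, rfl⟩
    · exact ⟨0, 1, by simp⟩
    · exact ⟨toAdd x, 0, by simp⟩
  | one => exact ⟨0, 0, by simp⟩
  | mul g h _ _ hg hh =>
    obtain ⟨u, p, rfl⟩ := hg
    obtain ⟨v, q, rfl⟩ := hh
    refine ⟨u + (↑(U ^ p) : Module.End R M) v, p + q, ?_⟩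
    rw [ofAdd_add, map_mul, ← zpow_mul_mul_inv_eq_of_conj hconj, zpow_add]
    group
  | inv g _ hg =>
    obtain ⟨u, p, rfl⟩ := hg
    refine ⟨(↑(U ^ (-p)) : Module.End R M) (-u), -p, ?_⟩
    rw [← zpow_mul_mul_inv_eq_of_conj hconj, ofAdd_neg, map_inv]
    group

theorem commutatorElement_mul_zpow_of_conj
    (hconj : ∀ u, t * a (ofAdd u) * t⁻¹ = a (ofAdd ((U : Module.End R M) u)))
    (u v : M) (p q : ℤ) :
    ⁅a (ofAdd u) * t ^ p, a (ofAdd v) * t ^ q⁆ =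
      a (ofAdd (((↑(U ^ p) : Module.End R M) v - v) -
        ((↑(U ^ q) : Module.End R M) u - u))) := by
  have h : ⁅a (ofAdd u) * t ^ p, a (ofAdd v) * t ^ q⁆ =
      a (ofAdd u) * (t ^ p * a (ofAdd v) * (t ^ p)⁻¹) *
        (t ^ q * a (ofAdd (-u)) * (t ^ q)⁻¹) * a (ofAdd (-v)) := by
    rw [commutatorElement_def, ofAdd_neg, ofAdd_neg, map_inv, map_inv]
    group
  rw [h, zpow_mul_mul_inv_eq_of_conj hconj, zpow_mul_mul_inv_eq_of_conj hconj, ← map_mul,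
    ← map_mul, ← map_mul, ← ofAdd_add, ← ofAdd_add, ← ofAdd_add, map_neg]
  congr 2
  abel

/-- The series `G ≥ a(M) ≥ a(N M) ≥ a(N² M) ≥ ⋯`. -/
def powerRangeSeries (a : Multiplicative M →* G) (N : Module.End R M) : ℕ → Subgroup G
  | 0 => ⊤
  | k + 1 => (a.comp (AddMonoidHom.toMultiplicative (N ^ k).toAddMonoidHom)).range

theorem mem_powerRangeSeries_succ {N : Module.End R M} {k : ℕ} {g : G} :
    g ∈ powerRangeSeries a N (k + 1) ↔ ∃ w, a (ofAdd ((N ^ k) w)) = g :=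
  ⟨fun ⟨x, hx⟩ => ⟨toAdd x, hx⟩, fun ⟨w, hw⟩ => ⟨ofAdd w, hw⟩⟩

theorem isDescendingCentralSeries_powerRangeSeries
    (hgen : Subgroup.closure (insert t (Set.range a)) = ⊤)
    (hconj : ∀ u, t * a (ofAdd u) * t⁻¹ = a (ofAdd ((U : Module.End R M) u))) :
    Subgroup.IsDescendingCentralSeries (powerRangeSeries a ((U : Module.End R M) - 1)) := by
  refine ⟨rfl, fun x n hx g => ?_⟩
  obtain ⟨v, q, rfl⟩ := exists_eq_mul_zpow_of_conj hgen hconj g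
  rw [mem_powerRangeSeries_succ]
  cases n with
  | zero =>
    obtain ⟨u, p, rfl⟩ := exists_eq_mul_zpow_of_conj hgen hconj x
    rw [commutatorElement_mul_zpow_of_conj hconj]
    exact ⟨_, by rw [pow_zero, Module.End.one_apply]⟩
  | succ k =>
    obtain ⟨w, rfl⟩ := mem_powerRangeSeries_succ.mp hx
    obtain ⟨c, hc⟩ := U.exists_val_zpow_sub_one_mul_pow_eq q k
    refine ⟨-(c w), ?_⟩
    conv_rhs => rw [← mul_one (a _), ← zpow_zero t]
    rw [commutatorElement_mul_zpow_of_conj hconj, zpow_zero,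
      Units.val_one, Module.End.one_apply, sub_self, zero_sub, map_neg, ← Module.End.mul_apply,
      ← hc, Module.End.mul_apply, LinearMap.sub_apply, Module.End.one_apply]

theorem isNilpotent_of_conj_eq_of_isNilpotent_sub_one
    (hgen : Subgroup.closure (insert t (Set.range a)) = ⊤) (f : Module.End R M)
    (hconj : ∀ u, t * a (ofAdd u) * t⁻¹ = a (ofAdd (f u))) (hf : IsNilpotent (f - 1)) :
    Group.IsNilpotent G := by
  obtain ⟨U, rfl⟩ : IsUnit f := by simpa using hf.isUnit_one_add
  obtain ⟨n, hn⟩ := hf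
  rw [Subgroup.nilpotent_iff_finite_descending_central_series]
  refine ⟨n + 1, _, isDescendingCentralSeries_powerRangeSeries hgen hconj, eq_bot_iff.mpr ?_⟩
  rintro g hg
  obtain ⟨w, rfl⟩ := mem_powerRangeSeries_succ.mp hg
  simp [hn]

end UnipotentConjugation

open Polynomial in
theorem Polynomial.Monic.eq_X_sub_C_pow_of_forall_mem_roots {K : Type*} [CommRing K] [IsDomain K]
    {p : K[X]} (hm : p.Monic) (hs : p.Splits) {z : K} (h : ∀ x ∈ p.roots, x = z) :
    p = (X - C z) ^ p.natDegree := by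
  have hroots : p.roots = Multiset.replicate p.natDegree z :=
    Multiset.eq_replicate.mpr ⟨hs.natDegree_eq_card_roots.symm, h⟩
  conv_lhs => rw [hs.eq_prod_roots_of_monic hm, hroots]
  simp [Multiset.map_replicate, Multiset.prod_replicate]

open Polynomial in
theorem Matrix.isNilpotent_sub_one_of_forall_mem_roots {R K n : Type*} [CommRing R] [Field K]
    [IsAlgClosed K] [Fintype n] [DecidableEq n] (φ : R →+* K) (hφ : Function.Injective φ)
    {T : Matrix n n R} (h : ∀ z ∈ (T.map φ).charpoly.roots, z = 1) : IsNilpotent (T - 1) := by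
  have hK : (T.map φ).charpoly = (X - C 1) ^ Fintype.card n := by
    rw [(charpoly_monic _).eq_X_sub_C_pow_of_forall_mem_roots (IsAlgClosed.splits _) h,
      charpoly_natDegree_eq_dim]
  have hR : T.charpoly = (X - C 1) ^ Fintype.card n :=
    Polynomial.map_injective φ hφ (by rw [← charpoly_map, hK]; simp)
  exact ⟨Fintype.card n, by simpa [hR] using T.aeval_self_charpoly⟩

section GmT

open Multiplicative

variable {m : ℕ} {T : Matrix (Fin m) (Fin m) ℤ}

theorem gmtA_commute (i j : Fin m) : Commute (gmtA m T i) (gmtA m T j) := by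
  have h := PresentedGroup.one_of_mem (rels := gmtRels m T) (Or.inl ⟨i, j, rfl⟩)
  simp only [map_mul, map_inv] at h
  exact commutatorElement_eq_one_iff_commute.mp h

theorem gmtT_mul_gmtA_mul_inv (i : Fin m) :
    gmtT m T * gmtA m T i * (gmtT m T)⁻¹ = gmtAProd m T (fun j => T j i) := by
  have h := PresentedGroup.one_of_mem (rels := gmtRels m T) (Or.inr ⟨i, rfl⟩)
  simp only [map_mul, map_inv, map_list_prod, List.map_ofFn, Function.comp_def, map_zpow] at h
  exact mul_inv_eq_one.mp h

theorem pairwise_commute_zpowersHom_gmtA :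
    Pairwise fun i j => ∀ x y : Multiplicative ℤ,
      Commute (zpowersHom (GmT m T) (gmtA m T i) x) (zpowersHom (GmT m T) (gmtA m T j) y) :=
  fun i j _ _ _ => (gmtA_commute i j).zpow_zpow _ _

variable (m T) in
def gmtAHom : Multiplicative (Fin m → ℤ) →* GmT m T :=
  (MonoidHom.noncommPiCoprod (fun i => zpowersHom (GmT m T) (gmtA m T i))
    pairwise_commute_zpowersHom_gmtA).comp
    (MulEquiv.funMultiplicative (Fin m) ℤ).toMonoidHom

theorem gmtAHom_ofAdd_single (i : Fin m) (n : ℤ) :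
    gmtAHom m T (ofAdd (Pi.single i n)) = gmtA m T i ^ n := by
  have h : MulEquiv.funMultiplicative (Fin m) ℤ (ofAdd (Pi.single i n)) =
      Pi.mulSingle i (ofAdd n) := by
    funext j
    by_cases hj : j = i
    · subst hj; simp
    · simp [hj]
  rw [gmtAHom, MonoidHom.comp_apply, MulEquiv.coe_toMonoidHom, h,
    MonoidHom.noncommPiCoprod_mulSingle, zpowersHom_apply, toAdd_ofAdd]

theorem gmtAHom_ofAdd (u : Fin m → ℤ) : gmtAHom m T (ofAdd u) = gmtAProd m T u := by
  conv_lhs => rw [← Finset.univ_sum_single u, ← List.sum_ofFn, ofAdd_list_prod, map_list_prod]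
  simp only [List.map_ofFn, Function.comp_def, gmtAHom_ofAdd_single, gmtAProd]

theorem gmtT_mul_gmtAHom_mul_inv (u : Fin m → ℤ) :
    gmtT m T * gmtAHom m T (ofAdd u) * (gmtT m T)⁻¹ =
      gmtAHom m T (ofAdd (Matrix.toLin' T u)) := by
  suffices h : (MulAut.conj (gmtT m T)).toMonoidHom.comp (gmtAHom m T) =
      (gmtAHom m T).comp (AddMonoidHom.toMultiplicative (Matrix.toLin' T).toAddMonoidHom) from
    DFunLike.congr_fun h (ofAdd u)
  refine MonoidHom.toAdditiveRight.injective (AddMonoidHom.pi_ext fun i n => ?_)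
  have hcol : T.mulVec (Pi.single i n) = n • fun j => T j i := by
    funext j
    simp [Matrix.mulVec_single, mul_comm]
  simp only [MonoidHom.coe_toAdditiveRight, Function.comp_apply, MonoidHom.coe_comp,
    MulEquiv.coe_toMonoidHom, MulAut.conj_apply, AddMonoidHom.toMultiplicative_apply_apply,
    LinearMap.toAddMonoidHom_coe, Matrix.toLin'_apply, toAdd_ofAdd]
  rw [gmtAHom_ofAdd_single, hcol, ofAdd_zsmul, map_zpow, gmtAHom_ofAdd, ← gmtT_mul_gmtA_mul_inv,
    conj_zpow]

theorem closure_insert_gmtT_range_gmtAHom :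
    Subgroup.closure (insert (gmtT m T) (Set.range (gmtAHom m T))) = ⊤ := by
  rw [eq_top_iff, ← PresentedGroup.closure_range_of, Subgroup.closure_le]
  rintro _ ⟨i | ⟨⟩, rfl⟩
  · refine Subgroup.subset_closure (Or.inr ⟨ofAdd (Pi.single i 1), ?_⟩)
    rw [gmtAHom_ofAdd_single, zpow_one]
    rfl
  · exact Subgroup.subset_closure (Or.inl rfl)

end GmT

theorem stmt10_general (m : ℕ) (T : Matrix (Fin m) (Fin m) ℤ)
    (h : ∀ z ∈ (Matrix.charpoly (T.map (Int.cast : ℤ → ℂ))).roots, z = 1) :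
    Group.IsNilpotent (GmT m T) := by
  refine isNilpotent_of_conj_eq_of_isNilpotent_sub_one closure_insert_gmtT_range_gmtAHom
    (Matrix.toLin' T) gmtT_mul_gmtAHom_mul_inv ?_
  have hT := (Matrix.isNilpotent_sub_one_of_forall_mem_roots (Int.castRingHom ℂ)
    Int.cast_injective h).map Matrix.toLinAlgEquiv'
  rwa [map_sub, map_one] at hT

/-- If all complex eigenvalues of `T` equal `1` (and `det T ≠ 0`), then the ascending
HNN-extension `G(m,T)` is nilpotent. -/
theorem stmt10 (m : ℕ) (T : Matrix (Fin m) (Fin m) ℤ) (hdet : T.det ≠ 0)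
    (h : ∀ z ∈ (Matrix.charpoly (T.map (Int.cast : ℤ → ℂ))).roots, z = 1) :
    Group.IsNilpotent (GmT m T) :=
  stmt10_general m T h
end
end

section
/- Suppose (a_n) is a sequence of real numbers with a_n ≤ 0 for all n, and suppose that for every function f : ℕ → [0,∞) with f(n) → 0 as n → ∞, one has a_n ≤ −n·f(n) for all sufficiently large n. Then limsup_{n→∞} a_n / n < 0. -/
open Filter

/-- If `(a_n)` is a nonpositive real sequence such that for every function `f : ℕ → [0,∞)`
tending to `0` one has `a_n ≤ −n·f(n)` for all sufficiently large `n`, then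
`limsup a_n / n < 0` (computed in `EReal`, so that `-∞` is allowed). -/
theorem stmt13 (a : ℕ → ℝ) (ha : ∀ n, a n ≤ 0)
    (h : ∀ f : ℕ → ℝ, (∀ n, 0 ≤ f n) → Tendsto f atTop (nhds 0) →
      ∀ᶠ n in atTop, a n ≤ -((n : ℝ) * f n)) :
    limsup (fun n : ℕ => ((a n / n : ℝ) : EReal)) atTop < 0 := by
  by_contra hcon
  push_neg at hcon
  have hfreq : ∀ k : ℕ, ∃ᶠ n in atTop, (-(1 / (k + 1 : ℝ)) < a n / n ∧ 1 ≤ n) := by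
    intro k
    have hb : ((-(1 / (k + 1 : ℝ)) : ℝ) : EReal)
        < limsup (fun n : ℕ => ((a n / n : ℝ) : EReal)) atTop := by
      refine lt_of_lt_of_le ?_ hcon
      have hlt : (-(1 / (k + 1 : ℝ))) < 0 := neg_lt_zero.mpr (by positivity)
      exact_mod_cast hlt
    have h1 := frequently_lt_of_lt_limsup (u := fun n : ℕ => ((a n / n : ℝ) : EReal)) (by isBoundedDefault) hb
    have h2 : ∀ᶠ n : ℕ in atTop, 1 ≤ n := eventually_ge_atTop 1
    refine (h1.and_eventually h2).mono ?_
    intro n hn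
    have h3 : ((-(1 / (k + 1 : ℝ)) : ℝ) : EReal) < ((a n / n : ℝ) : EReal) := hn.1
    exact ⟨by exact_mod_cast h3, hn.2⟩
  obtain ⟨φ, hφ, hP⟩ := Filter.extraction_forall_of_frequently hfreq
  set N : ℕ → ℕ := fun n => ((Finset.range (n+1)).filter (fun j => φ j ≤ n)).card with hNdef
  set f : ℕ → ℝ := fun n => 2 / (N n : ℝ) with hfdef
  have hNφ : ∀ k, N (φ k) = k + 1 := by
    intro k
    have hset : (Finset.range (φ k + 1)).filter (fun j => φ j ≤ φ k)
        = Finset.range (k + 1) := by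
      ext j
      simp only [Finset.mem_filter, Finset.mem_range]
      constructor
      · rintro ⟨_, hj⟩
        exact Nat.lt_succ_of_le (hφ.le_iff_le.mp hj)
      · intro hj
        have hjk : j ≤ k := Nat.lt_succ_iff.mp hj
        refine ⟨Nat.lt_succ_of_le (le_trans hjk (le_trans hφ.le_apply le_rfl)), hφ.le_iff_le.mpr hjk⟩
    simp [hNdef, hset]
  have hNtop : Tendsto N atTop atTop := by
    rw [tendsto_atTop]
    intro b
    filter_upwards [eventually_ge_atTop (φ b)] with n hn
    have hsub : Finset.range (b + 1) ⊆ (Finset.range (n+1)).filter (fun j => φ j ≤ n) := by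
      intro j hj
      have hjb : j ≤ b := Nat.lt_succ_iff.mp (Finset.mem_range.mp hj)
      have hφj : φ j ≤ n := le_trans (hφ.monotone hjb) hn
      exact Finset.mem_filter.mpr ⟨Finset.mem_range.mpr (Nat.lt_succ_of_le (le_trans hφ.le_apply hφj)), hφj⟩
    have := Finset.card_le_card hsub
    simp only [Finset.card_range] at this
    exact le_trans (Nat.le_succ b) this
  have hf0 : ∀ n, 0 ≤ f n := by
    intro n
    simp only [hfdef]
    positivity
  have hftend : Tendsto f atTop (nhds 0) :=
    tendsto_const_nhds.div_atTop (tendsto_natCast_atTop_atTop.comp hNtop)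
  have hev : ∀ᶠ k in atTop, a (φ k) ≤ -((φ k : ℝ) * f (φ k)) :=
    hφ.tendsto_atTop.eventually (h f hf0 hftend)
  obtain ⟨k, hk⟩ := hev.exists
  obtain ⟨hk1, hk2⟩ := hP k
  have hfφ : f (φ k) = 2 / (k + 1 : ℝ) := by
    simp only [hfdef]
    rw [hNφ k]
    push_cast
    ring
  have hm : (1 : ℝ) ≤ (φ k : ℝ) := by exact_mod_cast hk2
  have hmpos : (0 : ℝ) < (φ k : ℝ) := lt_of_lt_of_le one_pos hm
  have hcpos : (0 : ℝ) < (k + 1 : ℝ) := by positivity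
  rw [hfφ] at hk
  have h1' : -(1 / (k + 1 : ℝ)) * (φ k : ℝ) < a (φ k) :=
    (lt_div_iff₀ hmpos).mp hk1
  have hk' : a (φ k) ≤ -((φ k : ℝ) * (2 * (1 / (k + 1 : ℝ)))) := by
    rw [show (2 : ℝ) / (k + 1 : ℝ) = 2 * (1 / (k + 1 : ℝ)) from by ring] at hk
    exact hk
  linarith [hk', h1', mul_pos hmpos (one_div_pos.mpr hcpos)]
end
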